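/- Fix an integer r > 0 and suppose Assumptions (S1) (with α = 1), (S2) and (S3) hold with some q ≥ 2 (the (S1) bounds holding for all indices t with t−r ≥ 1). Define γ(u,r) := Cov(X̃_t(u), X̃_{t−r}(u)) (independent of t by stationarity). Then there is a constant C > 0 such that uniformly for r < t ≤ n: |Cov(X_{t,n}, X_{t−r,n}) − γ(t/n, r)| ≤ C n^{−1}; moreover u ↦ γ(u,r) is continuously differentiable on [0,1] with derivative ∂_u γ(u,r) = Cov(∂_u X̃_0(u), X̃_r(u)) + Cov(X̃_0(u), ∂_u X̃_r(u)). -/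

import Mathlib

open MeasureTheory Filter Set

noncomputable section

/-- The two-sided shift on `ℤ → ℝ`. -/
def shiftZ : (ℤ → ℝ) → (ℤ → ℝ) := fun x t => x (t + 1)

/-- Stationarity and ergodicity of a real-valued process indexed by `ℤ`. -/
def StatErg {Ω : Type*} [MeasurableSpace Ω] (μ : Measure Ω) (X : ℤ → Ω → ℝ) : Prop :=
  Ergodic shiftZ (Measure.map (fun ω t => X t ω) μ)

/-- Covariance of two real random variables. -/
def covar {Ω : Type*} [MeasurableSpace Ω] (μ : Measure Ω) (f g : Ω → ℝ) : ℝ :=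
  ∫ ω, (f ω - ∫ x, f x ∂μ) * (g ω - ∫ x, g x ∂μ) ∂μ

/-!
Covariance is controlled by `L²` distances:
`|Cov(X, Y) - Cov(X', Y')| ≤ 2‖X - X'‖₂ (‖Y - Y'‖₂ + ‖Y'‖₂) + 2‖X'‖₂ ‖Y - Y'‖₂`.
By (S1), `X_{t,n}` and `X_{t-r,n}` are `O(1/n)`-close in `L^q ⊆ L²` to `X̃_t(t/n)` and
`X̃_{t-r}(t/n)`, and stationarity of `X̃(t/n)` shifts the covariance of the latter pair back to
`γ(t/n, r)`; this gives the first claim.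

For the second, write `γ(u, r) = E[X̃_0(u) X̃_r(u)] - E[X̃_0(u)] E[X̃_r(u)]` and differentiate
under the integral sign: by the mean value theorem, difference quotients in `u` are dominated by
products of the suprema over `u` in (S2) and (S3), which are integrable by Cauchy–Schwarz.
The same domination and dominated convergence make the derivative continuous.
-/

open ProbabilityTheory Topology
open scoped ENNReal

section

variable {Ω : Type*} [MeasurableSpace Ω] {μ : Measure Ω}

lemma covar_eq_covariance (f g : Ω → ℝ) : covar μ f g = cov[f, g; μ] := rfl

section CovarianceBounds

variable {X X' Y Y' : Ω → ℝ}

lemma enorm_integral_le_eLpNorm_one (X : Ω → ℝ) : ‖μ[X]‖ₑ ≤ eLpNorm X 1 μ := by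
  rw [eLpNorm_one_eq_lintegral_enorm]
  exact enorm_integral_le_lintegral_enorm X

lemma enorm_integral_mul_le (hX : AEStronglyMeasurable X μ) (hY : AEStronglyMeasurable Y μ) :
    ‖μ[X * Y]‖ₑ ≤ eLpNorm X 2 μ * eLpNorm Y 2 μ := by
  have hHolder := eLpNorm_smul_le_mul_eLpNorm (p := 2) (q := 2) (r := 1) hY hX
  exact (enorm_integral_le_eLpNorm_one _).trans hHolder

variable [IsProbabilityMeasure μ]

lemma memLp_two_of_eLpNorm_le {f : Ω → ℝ} {p : ℝ≥0∞} (hp : 2 ≤ p)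
    (hf : AEStronglyMeasurable f μ) {c : ℝ} (h : eLpNorm f p μ ≤ ENNReal.ofReal c) :
    MemLp f 2 μ :=
  MemLp.mono_exponent ⟨hf, h.trans_lt ENNReal.ofReal_lt_top⟩ hp

lemma toReal_eLpNorm_two_le {f : Ω → ℝ} {p : ℝ≥0∞} (hp : 2 ≤ p)
    (hf : AEStronglyMeasurable f μ) {c : ℝ} (hc : 0 ≤ c) (h : eLpNorm f p μ ≤ ENNReal.ofReal c) :
    (eLpNorm f 2 μ).toReal ≤ c :=
  ENNReal.toReal_le_of_le_ofReal hc ((eLpNorm_le_eLpNorm_of_exponent_le hp hf).trans h)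

lemma enorm_integral_le_eLpNorm_two (hX : AEStronglyMeasurable X μ) :
    ‖μ[X]‖ₑ ≤ eLpNorm X 2 μ :=
  (enorm_integral_le_eLpNorm_one X).trans (eLpNorm_le_eLpNorm_of_exponent_le one_le_two hX)

lemma enorm_covariance_le (hX : MemLp X 2 μ) (hY : MemLp Y 2 μ) :
    ‖cov[X, Y; μ]‖ₑ ≤ 2 * (eLpNorm X 2 μ * eLpNorm Y 2 μ) := by
  rw [covariance_eq_sub hX hY, two_mul]
  refine enorm_sub_le.trans (add_le_add (enorm_integral_mul_le hX.1 hY.1) ?_)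
  rw [enorm_mul]
  exact mul_le_mul' (enorm_integral_le_eLpNorm_two hX.1) (enorm_integral_le_eLpNorm_two hY.1)

lemma abs_covariance_le (hX : MemLp X 2 μ) (hY : MemLp Y 2 μ) :
    |cov[X, Y; μ]| ≤ 2 * ((eLpNorm X 2 μ).toReal * (eLpNorm Y 2 μ).toReal) := by
  have h := ENNReal.toReal_mono (by finiteness [hX.2.ne, hY.2.ne]) (enorm_covariance_le hX hY)
  simpa [← Real.norm_eq_abs] using h

lemma abs_covariance_sub_covariance_le (hX : MemLp X 2 μ) (hX' : MemLp X' 2 μ)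
    (hY : MemLp Y 2 μ) (hY' : MemLp Y' 2 μ) :
    |cov[X, Y; μ] - cov[X', Y'; μ]| ≤ 2 * ((eLpNorm (X - X') 2 μ).toReal *
      ((eLpNorm (Y - Y') 2 μ).toReal + (eLpNorm Y' 2 μ).toReal) +
        (eLpNorm X' 2 μ).toReal * (eLpNorm (Y - Y') 2 μ).toReal) := by
  have hsplit : cov[X, Y; μ] - cov[X', Y'; μ] = cov[X - X', Y; μ] + cov[X', Y - Y'; μ] := by
    rw [covariance_sub_left hX hX' hY, covariance_sub_right hX' hY hY']
    ring
  have hY_le : (eLpNorm Y 2 μ).toReal ≤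
      (eLpNorm (Y - Y') 2 μ).toReal + (eLpNorm Y' 2 μ).toReal := by
    rw [← ENNReal.toReal_add (hY.sub hY').2.ne hY'.2.ne]
    refine ENNReal.toReal_mono (by finiteness [(hY.sub hY').2.ne, hY'.2.ne]) ?_
    simpa using eLpNorm_add_le (hY.sub hY').1 hY'.1 one_le_two
  rw [hsplit]
  refine (abs_add_le _ _).trans ?_
  grw [abs_covariance_le (hX.sub hX') hY, abs_covariance_le hX' (hY.sub hY'), hY_le]
  linarith

lemma abs_covariance_sub_covariance_le_of_eLpNorm_le {p : ℝ≥0∞} (hp : 2 ≤ p) {a b m : ℝ}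
    (ha : 0 ≤ a) (hb : 0 ≤ b) (hm : 0 ≤ m)
    (hX : AEStronglyMeasurable X μ) (hX' : AEStronglyMeasurable X' μ)
    (hY : AEStronglyMeasurable Y μ) (hY' : AEStronglyMeasurable Y' μ)
    (hXX' : eLpNorm (X - X') p μ ≤ ENNReal.ofReal a)
    (hYY' : eLpNorm (Y - Y') p μ ≤ ENNReal.ofReal b)
    (hX'm : eLpNorm X' p μ ≤ ENNReal.ofReal m) (hY'm : eLpNorm Y' p μ ≤ ENNReal.ofReal m) :
    |cov[X, Y; μ] - cov[X', Y'; μ]| ≤ 2 * (a * (b + m) + m * b) := by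
  have hX'₂ := memLp_two_of_eLpNorm_le hp hX' hX'm
  have hY'₂ := memLp_two_of_eLpNorm_le hp hY' hY'm
  have hX₂ : MemLp X 2 μ := by
    simpa using (memLp_two_of_eLpNorm_le hp (hX.sub hX') hXX').add hX'₂
  have hY₂ : MemLp Y 2 μ := by
    simpa using (memLp_two_of_eLpNorm_le hp (hY.sub hY') hYY').add hY'₂
  have := toReal_eLpNorm_two_le hp (hX.sub hX') ha hXX'
  have := toReal_eLpNorm_two_le hp (hY.sub hY') hb hYY'
  have := toReal_eLpNorm_two_le hp hX' hm hX'm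
  have := toReal_eLpNorm_two_le hp hY' hm hY'm
  calc _ ≤ _ := abs_covariance_sub_covariance_le hX₂ hX'₂ hY₂ hY'₂
    _ ≤ _ := by gcongr

end CovarianceBounds

lemma ProbabilityTheory.IdentDistrib.covariance_eq {Ω' : Type*} [MeasurableSpace Ω']
    {ν : Measure Ω'} {X Y : Ω → ℝ} {X' Y' : Ω' → ℝ}
    (h : IdentDistrib (fun ω => (X ω, Y ω)) (fun ω => (X' ω, Y' ω)) μ ν) :
    cov[X, Y; μ] = cov[X', Y'; ν] := by
  have hlaw : cov[X, Y; μ] = cov[Prod.fst, Prod.snd; μ.map fun ω => (X ω, Y ω)] :=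
    (covariance_map_fun measurable_fst.aestronglyMeasurable measurable_snd.aestronglyMeasurable
      h.aemeasurable_fst).symm
  have hlaw' : cov[X', Y'; ν] = cov[Prod.fst, Prod.snd; ν.map fun ω => (X' ω, Y' ω)] :=
    (covariance_map_fun measurable_fst.aestronglyMeasurable measurable_snd.aestronglyMeasurable
      h.aemeasurable_snd).symm
  rw [hlaw, hlaw', h.map_eq]

lemma shiftZ_iterate_apply (m : ℕ) (x : ℤ → ℝ) (t : ℤ) : shiftZ^[m] x t = x (t + m) := by
  induction m generalizing x with
  | zero => simp
  | succ m ih =>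
    rw [Function.iterate_succ_apply, ih]
    simp only [shiftZ, Nat.cast_succ]
    ring_nf

lemma measurable_shiftZ : Measurable shiftZ :=
  measurable_pi_lambda _ fun t => measurable_pi_apply (t + 1)

namespace StatErg

variable {X : ℤ → Ω → ℝ}

lemma identDistrib_shift (hX : ∀ t, Measurable (X t)) (h : StatErg μ X) (m : ℕ) :
    IdentDistrib (fun ω t => X (t + m) ω) (fun ω t => X t ω) μ μ := by
  have hpath : Measurable fun ω t => X t ω := measurable_pi_lambda _ hX
  refine ⟨(measurable_pi_lambda _ fun t => hX (t + m)).aemeasurable, hpath.aemeasurable, ?_⟩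
  have hmap := Measure.map_map (measurable_shiftZ.iterate m) hpath (μ := μ)
  rw [(h.toMeasurePreserving.iterate m).map_eq] at hmap
  rw [hmap]
  congr 1
  ext ω t
  exact (shiftZ_iterate_apply m (fun t => X t ω) t).symm

lemma eLpNorm_eq (hX : ∀ t, Measurable (X t)) (h : StatErg μ X) (m : ℕ) (p : ℝ≥0∞) :
    eLpNorm (X m) p μ = eLpNorm (X 0) p μ := by
  have := ((h.identDistrib_shift hX m).comp (measurable_pi_apply 0)).eLpNorm_eq p
  simpa [Function.comp_def] using this

lemma covariance_eq (hX : ∀ t, Measurable (X t)) (h : StatErg μ X) (a b : ℤ) (m : ℕ) :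
    cov[X (a + m), X (b + m); μ] = cov[X a, X b; μ] :=
  ((h.identDistrib_shift hX m).comp
    ((measurable_pi_apply a).prodMk (measurable_pi_apply b))).covariance_eq

end StatErg

section TriangularArray

variable {X : ℕ → ℕ → Ω → ℝ} {Xt : ℝ → ℤ → Ω → ℝ} {q CB : ℝ}

lemma eLpNorm_sub_lagged_le (hq : 1 ≤ q) (hCB : 0 ≤ CB)
    (hXmeas : ∀ n t, Measurable (X n t)) (hXtmeas : ∀ u t, Measurable (Xt u t))
    (hhoelder : ∀ u ∈ Icc (0:ℝ) 1, ∀ v ∈ Icc (0:ℝ) 1, ∀ t : ℤ,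
      eLpNorm (fun ω => Xt u t ω - Xt v t ω) (ENNReal.ofReal q) μ
        ≤ ENNReal.ofReal (CB * |u - v|))
    (happrox : ∀ n : ℕ, 1 ≤ n → ∀ t : ℕ, 1 ≤ t → t ≤ n →
      eLpNorm (fun ω => X n t ω - Xt ((t : ℝ) / (n : ℝ)) (t : ℤ) ω) (ENNReal.ofReal q) μ
        ≤ ENNReal.ofReal (CB * (n : ℝ)⁻¹))
    {n r s : ℕ} (hn : 1 ≤ n) (hs : 1 ≤ s) (hrs : r + s ≤ n) :
    eLpNorm (X n s - Xt (((r + s : ℕ) : ℝ) / n) s) (ENNReal.ofReal q) μ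
      ≤ ENNReal.ofReal (CB * (1 + r) * (n : ℝ)⁻¹) := by
  have hmem : ∀ m : ℕ, m ≤ n → (m : ℝ) / n ∈ Icc (0:ℝ) 1 := fun m hm =>
    ⟨by positivity, div_le_one_of_le₀ (by exact_mod_cast hm) (Nat.cast_nonneg n)⟩
  have hgap : |(s : ℝ) / n - ((r + s : ℕ) : ℝ) / n| = r * (n : ℝ)⁻¹ := by
    rw [show (s : ℝ) / n - ((r + s : ℕ) : ℝ) / n = -(r * (n : ℝ)⁻¹) by push_cast; ring, abs_neg,
      abs_of_nonneg (by positivity)]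
  calc eLpNorm (X n s - Xt (((r + s : ℕ) : ℝ) / n) s) (ENNReal.ofReal q) μ
      = eLpNorm ((fun ω => X n s ω - Xt ((s : ℝ) / n) s ω) +
          fun ω => Xt ((s : ℝ) / n) s ω - Xt (((r + s : ℕ) : ℝ) / n) s ω) (ENNReal.ofReal q) μ := by
        congr 1; ext ω; simp
    _ ≤ ENNReal.ofReal (CB * (n : ℝ)⁻¹) + ENNReal.ofReal (CB * (r * (n : ℝ)⁻¹)) :=
        (eLpNorm_add_le ((hXmeas n s).sub (hXtmeas _ s)).aestronglyMeasurable
          ((hXtmeas _ s).sub (hXtmeas _ s)).aestronglyMeasurable (by simpa using hq)).trans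
          (add_le_add (happrox n hn s hs (by omega))
            ((hhoelder _ (hmem s (by omega)) _ (hmem _ hrs) s).trans_eq (by rw [hgap])))
    _ = _ := by rw [← ENNReal.ofReal_add (by positivity) (by positivity)]; ring_nf

variable [IsProbabilityMeasure μ]

lemma exists_abs_covar_sub_le (hq : 2 ≤ q) (hCB : 0 < CB)
    (hXmeas : ∀ n t, Measurable (X n t)) (hXtmeas : ∀ u t, Measurable (Xt u t))
    (hstat : ∀ u ∈ Icc (0:ℝ) 1, StatErg μ (fun t => Xt u t))
    (hmom : ∃ M : ℝ, ∀ u ∈ Icc (0:ℝ) 1,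
      eLpNorm (Xt u 0) (ENNReal.ofReal q) μ ≤ ENNReal.ofReal M)
    (hhoelder : ∀ u ∈ Icc (0:ℝ) 1, ∀ v ∈ Icc (0:ℝ) 1, ∀ t : ℤ,
      eLpNorm (fun ω => Xt u t ω - Xt v t ω) (ENNReal.ofReal q) μ
        ≤ ENNReal.ofReal (CB * |u - v|))
    (happrox : ∀ n : ℕ, 1 ≤ n → ∀ t : ℕ, 1 ≤ t → t ≤ n →
      eLpNorm (fun ω => X n t ω - Xt ((t : ℝ) / (n : ℝ)) (t : ℤ) ω) (ENNReal.ofReal q) μ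
        ≤ ENNReal.ofReal (CB * (n : ℝ)⁻¹)) (r : ℕ) :
    ∃ C : ℝ, 0 < C ∧ ∀ n : ℕ, 1 ≤ n → ∀ t : ℕ, r < t → t ≤ n →
      |covar μ (X n t) (X n (t - r))
          - covar μ (Xt ((t : ℝ) / (n : ℝ)) (r : ℤ)) (Xt ((t : ℝ) / (n : ℝ)) 0)|
        ≤ C * (n : ℝ)⁻¹ := by
  obtain ⟨M, hM⟩ := hmom
  set K := max M 0
  refine ⟨2 * (CB * (CB * (1 + r) + K) + K * (CB * (1 + r))), by positivity, ?_⟩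
  intro n hn t hrt htn
  obtain ⟨s, rfl⟩ : ∃ s, t = r + s := ⟨t - r, by omega⟩
  set u : ℝ := ((r + s : ℕ) : ℝ) / n
  have hu : u ∈ Icc (0:ℝ) 1 :=
    ⟨by positivity, div_le_one_of_le₀ (by exact_mod_cast htn) (Nat.cast_nonneg n)⟩
  have hq2 : (2 : ℝ≥0∞) ≤ ENNReal.ofReal q := by simpa using ENNReal.ofReal_le_ofReal hq
  set e : ℝ := (n : ℝ)⁻¹
  have he1 : e ≤ 1 := inv_le_one_of_one_le₀ (by exact_mod_cast hn)
  have hmomK : ∀ m : ℕ, eLpNorm (Xt u m) (ENNReal.ofReal q) μ ≤ ENNReal.ofReal K := fun m => by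
    rw [(hstat u hu).eLpNorm_eq (hXtmeas u) m]
    exact (hM u hu).trans (ENNReal.ofReal_le_ofReal (le_max_left M 0))
  have hcov : cov[Xt u ↑(r + s), Xt u s; μ] = cov[Xt u r, Xt u 0; μ] := by
    simpa using (hstat u hu).covariance_eq (hXtmeas u) r 0 s
  rw [Nat.add_sub_cancel_left, covar_eq_covariance, covar_eq_covariance, ← hcov]
  calc _ ≤ 2 * (CB * e * (CB * (1 + r) * e + K) + K * (CB * (1 + r) * e)) :=
        abs_covariance_sub_covariance_le_of_eLpNorm_le hq2 (by positivity) (by positivity)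
          (le_max_right M 0) (hXmeas n _).aestronglyMeasurable (hXtmeas u _).aestronglyMeasurable
          (hXmeas n _).aestronglyMeasurable (hXtmeas u _).aestronglyMeasurable
          (happrox n hn _ (by omega) htn)
          (eLpNorm_sub_lagged_le (by linarith) hCB.le hXmeas hXtmeas hhoelder happrox hn
            (by omega) htn)
          (hmomK _) (hmomK _)
    _ ≤ _ := by
        have : CB * (1 + r) * e ≤ CB * (1 + r) := mul_le_of_le_one_right (by positivity) he1
        nlinarith [mul_le_mul_of_nonneg_left this (by positivity : 0 ≤ CB * e)]

end TriangularArray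

section Domination

variable {α : Type*} {F G : α → Ω → ℝ} {s : Set α} {p : ℝ≥0∞}

def LpDominatedOn (μ : Measure Ω) (p : ℝ≥0∞) (F : α → Ω → ℝ) (s : Set α) : Prop :=
  (∀ v ∈ s, AEStronglyMeasurable (F v) μ) ∧
    ∃ S : Ω → ℝ, MemLp S p μ ∧ ∀ᵐ ω ∂μ, ∀ v ∈ s, ‖F v ω‖ ≤ S ω

namespace LpDominatedOn

lemma memLp (hF : LpDominatedOn μ p F s) {v : α} (hv : v ∈ s) : MemLp (F v) p μ := by
  obtain ⟨hFm, S, hS, hFS⟩ := hF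
  refine hS.of_le (hFm v hv) ?_
  filter_upwards [hFS] with ω hω
  exact (hω v hv).trans (le_abs_self _)

lemma mono_exponent [IsFiniteMeasure μ] {q : ℝ≥0∞} (hF : LpDominatedOn μ q F s) (hpq : p ≤ q) :
    LpDominatedOn μ p F s := by
  obtain ⟨hFm, S, hS, hFS⟩ := hF
  exact ⟨hFm, S, hS.mono_exponent hpq, hFS⟩

lemma add (hF : LpDominatedOn μ p F s) (hG : LpDominatedOn μ p G s) :
    LpDominatedOn μ p (fun v ω => F v ω + G v ω) s := by
  obtain ⟨hFm, SF, hSF, hFS⟩ := hF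
  obtain ⟨hGm, SG, hSG, hGS⟩ := hG
  refine ⟨fun v hv => (hFm v hv).add (hGm v hv), SF + SG, hSF.add hSG, ?_⟩
  filter_upwards [hFS, hGS] with ω hF hG v hv
  exact (norm_add_le _ _).trans (add_le_add (hF v hv) (hG v hv))

lemma mul (hF : LpDominatedOn μ 2 F s) (hG : LpDominatedOn μ 2 G s) :
    LpDominatedOn μ 1 (fun v ω => F v ω * G v ω) s := by
  obtain ⟨hFm, SF, hSF, hFS⟩ := hF
  obtain ⟨hGm, SG, hSG, hGS⟩ := hG
  refine ⟨fun v hv => (hFm v hv).mul (hGm v hv), SF * SG,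
    memLp_one_iff_integrable.2 (hSF.integrable_mul hSG), ?_⟩
  filter_upwards [hFS, hGS] with ω hF hG v hv
  rw [norm_mul]
  exact mul_le_mul (hF v hv) (hG v hv) (norm_nonneg _) ((norm_nonneg _).trans (hF v hv))

lemma continuousOn_integral [TopologicalSpace α] [FirstCountableTopology α]
    (hF : LpDominatedOn μ 1 F s) (hc : ∀ᵐ ω ∂μ, ContinuousOn (F · ω) s) :
    ContinuousOn (fun v => ∫ ω, F v ω ∂μ) s := by
  obtain ⟨hFm, S, hS, hFS⟩ := hF
  exact continuousOn_of_dominated hFm (fun v hv => hFS.mono fun ω h => h v hv)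
    (memLp_one_iff_integrable.1 hS) hc

end LpDominatedOn

variable [TopologicalSpace α]

lemma ContinuousOn.abs_le_iSup_abs {f : α → ℝ} (hs : IsCompact s) (hf : ContinuousOn f s)
    {v : α} (hv : v ∈ s) : |f v| ≤ ⨆ u : s, |f u| := by
  have hbdd := hs.bddAbove_image (continuous_abs.comp_continuousOn hf)
  rw [image_eq_range] at hbdd
  exact le_ciSup hbdd ⟨v, hv⟩

lemma aemeasurable_iSup_of_continuousOn [TopologicalSpace.SeparableSpace s]
    (hF : ∀ v ∈ s, AEMeasurable (F v) μ) (hc : ∀ᵐ ω ∂μ, ContinuousOn (F · ω) s) :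
    AEMeasurable (fun ω => ⨆ u : s, F u ω) μ := by
  obtain ⟨D, hDc, hD⟩ := TopologicalSpace.exists_countable_dense s
  have : Countable D := hDc.to_subtype
  refine (AEMeasurable.iSup fun d : D => hF d d.1.2).congr ?_
  filter_upwards [hc] with ω hω
  exact hD.ciSup' hω.domRestrict

lemma lpDominatedOn_of_continuousOn [TopologicalSpace.SeparableSpace s] (hs : IsCompact s)
    (hF : ∀ v ∈ s, AEMeasurable (F v) μ) (hc : ∀ᵐ ω ∂μ, ContinuousOn (F · ω) s)
    (hsup : eLpNorm (fun ω => ⨆ u : s, |F u ω|) p μ < ⊤) : LpDominatedOn μ p F s := by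
  have hsupm : AEMeasurable (fun ω => ⨆ u : s, |F u ω|) μ :=
    aemeasurable_iSup_of_continuousOn (fun v hv => (hF v hv).abs)
      (hc.mono fun ω h => continuous_abs.comp_continuousOn h)
  refine ⟨fun v hv => (hF v hv).aestronglyMeasurable, _, ⟨hsupm.aestronglyMeasurable, hsup⟩, ?_⟩
  filter_upwards [hc] with ω hω v hv
  exact hω.abs_le_iSup_abs hs hv

end Domination

section Derivative

variable {F F' : ℝ → Ω → ℝ} {s : Set ℝ} {u : ℝ}

lemma LpDominatedOn.hasDerivWithinAt_integral (hs : Convex ℝ s) (hu : u ∈ s)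
    (hF : ∀ v ∈ s, Integrable (F v) μ) (hF' : LpDominatedOn μ 1 F' s)
    (hd : ∀ᵐ ω ∂μ, ∀ v ∈ s, HasDerivWithinAt (F · ω) (F' v ω) s v) :
    HasDerivWithinAt (fun v => ∫ ω, F v ω ∂μ) (∫ ω, F' u ω ∂μ) s u := by
  obtain ⟨-, S, hS, hF'S⟩ := hF'
  have hslope : ∀ v ∈ s, (fun ω => slope (F · ω) u v) = fun ω => (F v ω - F u ω) / (v - u) :=
    fun v _ => funext fun ω => slope_def_field _ _ _
  rw [hasDerivWithinAt_iff_tendsto_slope]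
  have hlim : Tendsto (fun v => ∫ ω, slope (F · ω) u v ∂μ) (𝓝[s \ {u}] u)
      (𝓝 (∫ ω, F' u ω ∂μ)) := by
    refine tendsto_integral_filter_of_dominated_convergence S ?_ ?_
      (memLp_one_iff_integrable.1 hS) ?_
    · filter_upwards [self_mem_nhdsWithin] with v hv
      rw [hslope v hv.1]
      exact (((hF v hv.1).sub (hF u hu)).div_const _).aestronglyMeasurable
    · -- the mean value theorem bounds every slope by `S`
      filter_upwards [self_mem_nhdsWithin] with v hv
      filter_upwards [hd, hF'S] with ω hdω hSω
      have hne : v - u ≠ 0 := sub_ne_zero.2 hv.2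
      have hmvt := hs.norm_image_sub_le_of_norm_hasDerivWithin_le hdω hSω hu hv.1
      rw [slope_def_field, norm_div, div_le_iff₀ (norm_pos_iff.2 hne)]
      exact hmvt
    · filter_upwards [hd] with ω hω
      exact hasDerivWithinAt_iff_tendsto_slope.1 (hω u hu)
  refine hlim.congr' ?_
  filter_upwards [self_mem_nhdsWithin] with v hv
  rw [hslope v hv.1, integral_div, integral_sub (hF v hv.1) (hF u hu), slope_def_field]

lemma aemeasurable_of_hasDerivWithinAt {f' : Ω → ℝ} (hu : AccPt u (𝓟 s))
    (hF : ∀ v, AEMeasurable (F v) μ) (hd : ∀ᵐ ω ∂μ, HasDerivWithinAt (F · ω) (f' ω) s u) :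
    AEMeasurable f' μ := by
  have := accPt_principal_iff_nhdsWithin.1 hu
  obtain ⟨w, hw⟩ := exists_seq_tendsto (𝓝[s \ {u}] u)
  refine aemeasurable_of_tendsto_metrizable_ae' (f := fun k ω => slope (F · ω) u (w k))
    (fun k => ?_) ?_
  · simp_rw [slope_def_field]
    exact ((hF (w k)).sub (hF u)).div_const _
  · filter_upwards [hd] with ω hω
    exact (hasDerivWithinAt_iff_tendsto_slope.1 hω).comp hw

end Derivative

section ParametricCovariance

variable [IsProbabilityMeasure μ]

lemma continuousOn_covariance {α : Type*} [TopologicalSpace α] [FirstCountableTopology α]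
    {F G : α → Ω → ℝ} {s : Set α} (hF : LpDominatedOn μ 2 F s) (hG : LpDominatedOn μ 2 G s)
    (hFc : ∀ᵐ ω ∂μ, ContinuousOn (F · ω) s) (hGc : ∀ᵐ ω ∂μ, ContinuousOn (G · ω) s) :
    ContinuousOn (fun v => cov[F v, G v; μ]) s := by
  have hmean : ∀ {H : α → Ω → ℝ}, LpDominatedOn μ 2 H s → (∀ᵐ ω ∂μ, ContinuousOn (H · ω) s) →
      ContinuousOn (fun v => ∫ ω, H v ω ∂μ) s :=
    fun hH hHc => (hH.mono_exponent one_le_two).continuousOn_integral hHc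
  refine (((hF.mul hG).continuousOn_integral ?_).sub ((hmean hF hFc).mul (hmean hG hGc))).congr
    fun v hv => covariance_eq_sub (hF.memLp hv) (hG.memLp hv)
  filter_upwards [hFc, hGc] with ω hFω hGω
  exact hFω.mul hGω

lemma hasDerivWithinAt_covariance {F G F' G' : ℝ → Ω → ℝ} {s : Set ℝ} {u : ℝ}
    (hs : Convex ℝ s) (hu : u ∈ s) (hF : LpDominatedOn μ 2 F s) (hG : LpDominatedOn μ 2 G s)
    (hF' : LpDominatedOn μ 2 F' s) (hG' : LpDominatedOn μ 2 G' s)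
    (hdF : ∀ᵐ ω ∂μ, ∀ v ∈ s, HasDerivWithinAt (F · ω) (F' v ω) s v)
    (hdG : ∀ᵐ ω ∂μ, ∀ v ∈ s, HasDerivWithinAt (G · ω) (G' v ω) s v) :
    HasDerivWithinAt (fun v => cov[F v, G v; μ]) (cov[F' u, G u; μ] + cov[F u, G' u; μ]) s u := by
  have hmean : ∀ {H H' : ℝ → Ω → ℝ}, LpDominatedOn μ 2 H s → LpDominatedOn μ 2 H' s →
      (∀ᵐ ω ∂μ, ∀ v ∈ s, HasDerivWithinAt (H · ω) (H' v ω) s v) →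
      HasDerivWithinAt (fun v => ∫ ω, H v ω ∂μ) (∫ ω, H' u ω ∂μ) s u :=
    fun hH hH' hdH => (hH'.mono_exponent one_le_two).hasDerivWithinAt_integral hs hu
      (fun v hv => (hH.memLp hv).integrable one_le_two) hdH
  have hprod := ((hF'.mul hG).add (hF.mul hG')).hasDerivWithinAt_integral hs hu
    (fun v hv => (hF.memLp hv).integrable_mul (hG.memLp hv)) (by
      filter_upwards [hdF, hdG] with ω hFω hGω v hv
      exact (hFω v hv).mul (hGω v hv))
  have hderiv := hprod.sub ((hmean hF hF' hdF).mul (hmean hG hG' hdG))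
  have hvalue : cov[F' u, G u; μ] + cov[F u, G' u; μ] =
      ∫ ω, (F' u ω * G u ω + F u ω * G' u ω) ∂μ -
        ((∫ ω, F' u ω ∂μ) * ∫ ω, G u ω ∂μ + (∫ ω, F u ω ∂μ) * ∫ ω, G' u ω ∂μ) := by
    have hsplit : ∫ ω, (F' u ω * G u ω + F u ω * G' u ω) ∂μ =
        μ[F' u * G u] + μ[F u * G' u] :=
      integral_add ((hF'.memLp hu).integrable_mul (hG.memLp hu))
        ((hF.memLp hu).integrable_mul (hG'.memLp hu))
    rw [hsplit, covariance_eq_sub (hF'.memLp hu) (hG.memLp hu),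
      covariance_eq_sub (hF.memLp hu) (hG'.memLp hu)]
    ring
  rw [hvalue]
  exact hderiv.congr (fun v hv => covariance_eq_sub (hF.memLp hv) (hG.memLp hv))
    (covariance_eq_sub (hF.memLp hu) (hG.memLp hu))

end ParametricCovariance

end

theorem covariance_expansion_general {Ω : Type*} [MeasurableSpace Ω] (μ : Measure Ω)
    [IsProbabilityMeasure μ]
    (X : ℕ → ℕ → Ω → ℝ) (Xt : ℝ → ℤ → Ω → ℝ) (DX : ℝ → ℤ → Ω → ℝ)
    (hXmeas : ∀ n t, Measurable (X n t))
    (hXtmeas : ∀ u t, Measurable (Xt u t))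
    (hstat : ∀ u ∈ Icc (0:ℝ) 1, StatErg μ (fun t => Xt u t))
    (r : ℕ)
    (q : ℝ) (hq : 2 ≤ q) (CB : ℝ) (hCB : 0 < CB)
    -- (S1) with α = 1 :
    (hmom : ∃ M : ℝ, ∀ u ∈ Icc (0:ℝ) 1,
      eLpNorm (Xt u 0) (ENNReal.ofReal q) μ ≤ ENNReal.ofReal M)
    (hhoelder : ∀ u ∈ Icc (0:ℝ) 1, ∀ v ∈ Icc (0:ℝ) 1, ∀ t : ℤ,
      eLpNorm (fun ω => Xt u t ω - Xt v t ω) (ENNReal.ofReal q) μ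
        ≤ ENNReal.ofReal (CB * |u - v|))
    (happrox : ∀ n : ℕ, 1 ≤ n → ∀ t : ℕ, 1 ≤ t → t ≤ n →
      eLpNorm (fun ω => X n t ω - Xt ((t : ℝ) / (n : ℝ)) (t : ℤ) ω) (ENNReal.ofReal q) μ
        ≤ ENNReal.ofReal (CB * (n : ℝ)⁻¹))
    -- (S2) :
    (hcont : ∀ t : ℤ, ∀ᵐ ω ∂μ, ContinuousOn (fun u => Xt u t ω) (Icc (0:ℝ) 1))
    (hsupmom : ∀ t : ℤ,
      eLpNorm (fun ω => ⨆ u : Icc (0:ℝ) 1, |Xt (u : ℝ) t ω|) (ENNReal.ofReal q) μ < ⊤)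
    -- (S3) :
    (hderiv : ∀ t : ℤ, ∀ᵐ ω ∂μ,
      (∀ u ∈ Icc (0:ℝ) 1,
        HasDerivWithinAt (fun v => Xt v t ω) (DX u t ω) (Icc (0:ℝ) 1) u) ∧
      ContinuousOn (fun u => DX u t ω) (Icc (0:ℝ) 1))
    (hDmom : ∀ t : ℤ,
      eLpNorm (fun ω => ⨆ u : Icc (0:ℝ) 1, |DX (u : ℝ) t ω|) (ENNReal.ofReal q) μ < ⊤) :
    (∃ C : ℝ, 0 < C ∧ ∀ n : ℕ, 1 ≤ n → ∀ t : ℕ, r < t → t ≤ n →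
      |covar μ (X n t) (X n (t - r))
          - covar μ (Xt ((t : ℝ) / (n : ℝ)) (r : ℤ)) (Xt ((t : ℝ) / (n : ℝ)) 0)|
        ≤ C * (n : ℝ)⁻¹) ∧
    (∀ u ∈ Icc (0:ℝ) 1,
      HasDerivWithinAt (fun v => covar μ (Xt v (r : ℤ)) (Xt v 0))
        (covar μ (DX u 0) (Xt u (r : ℤ)) + covar μ (Xt u 0) (DX u (r : ℤ)))
        (Icc (0:ℝ) 1) u) ∧
    ContinuousOn (fun u => covar μ (DX u 0) (Xt u (r : ℤ))
      + covar μ (Xt u 0) (DX u (r : ℤ))) (Icc (0:ℝ) 1) := by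
  have hq2 : (2 : ℝ≥0∞) ≤ ENNReal.ofReal q := by simpa using ENNReal.ofReal_le_ofReal hq
  have hXdom : ∀ t : ℤ, LpDominatedOn μ 2 (fun v => Xt v t) (Icc 0 1) := fun t =>
    (lpDominatedOn_of_continuousOn isCompact_Icc (fun v _ => (hXtmeas v t).aemeasurable)
      (hcont t) (hsupmom t)).mono_exponent hq2
  have hDdom : ∀ t : ℤ, LpDominatedOn μ 2 (fun v => DX v t) (Icc 0 1) := fun t =>
    (lpDominatedOn_of_continuousOn isCompact_Icc
      (fun v hv => aemeasurable_of_hasDerivWithinAt (uniqueDiffOn_Icc zero_lt_one v hv).accPt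
        (fun w => (hXtmeas w t).aemeasurable) ((hderiv t).mono fun _ h => h.1 v hv))
      ((hderiv t).mono fun _ h => h.2) (hDmom t)).mono_exponent hq2
  refine ⟨exists_abs_covar_sub_le hq hCB hXmeas hXtmeas hstat hmom hhoelder happrox r,
    fun u hu => ?_, ?_⟩
  · simp only [covar_eq_covariance, covariance_comm (Xt _ (r : ℤ))]
    exact hasDerivWithinAt_covariance (convex_Icc 0 1) hu (hXdom 0) (hXdom r) (hDdom 0) (hDdom r)
      ((hderiv 0).mono fun _ h => h.1) ((hderiv r).mono fun _ h => h.1)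
  · simp only [covar_eq_covariance]
    exact (continuousOn_covariance (hDdom 0) (hXdom r) ((hderiv 0).mono fun _ h => h.2)
      (hcont r)).add
      (continuousOn_covariance (hXdom 0) (hDdom r) (hcont 0) ((hderiv r).mono fun _ h => h.2))

/-- **Covariance expansion** (Corollary 3.10): under (S1) with `α = 1`, (S2), (S3) with
`q ≥ 2`, for fixed lag `r > 0` and `γ(u,r) := Cov(X̃_t(u), X̃_{t−r}(u))`:
`Cov(X_{t,n}, X_{t−r,n}) = γ(t/n, r) + O(n⁻¹)` uniformly in `t`, and `u ↦ γ(u,r)` is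
continuously differentiable with derivative
`Cov(∂_u X̃_0(u), X̃_r(u)) + Cov(X̃_0(u), ∂_u X̃_r(u))`. -/
theorem covariance_expansion {Ω : Type*} [MeasurableSpace Ω] (μ : Measure Ω)
    [IsProbabilityMeasure μ]
    (X : ℕ → ℕ → Ω → ℝ) (Xt : ℝ → ℤ → Ω → ℝ) (DX : ℝ → ℤ → Ω → ℝ)
    (hXmeas : ∀ n t, Measurable (X n t))
    (hXtmeas : ∀ u t, Measurable (Xt u t))
    (hstat : ∀ u ∈ Icc (0:ℝ) 1, StatErg μ (fun t => Xt u t))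
    (r : ℕ) (hr : 0 < r)
    (q : ℝ) (hq : 2 ≤ q) (CB : ℝ) (hCB : 0 < CB)
    -- (S1) with α = 1 :
    (hmom : ∃ M : ℝ, ∀ u ∈ Icc (0:ℝ) 1,
      eLpNorm (Xt u 0) (ENNReal.ofReal q) μ ≤ ENNReal.ofReal M)
    (hhoelder : ∀ u ∈ Icc (0:ℝ) 1, ∀ v ∈ Icc (0:ℝ) 1, ∀ t : ℤ,
      eLpNorm (fun ω => Xt u t ω - Xt v t ω) (ENNReal.ofReal q) μ
        ≤ ENNReal.ofReal (CB * |u - v|))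
    (happrox : ∀ n : ℕ, 1 ≤ n → ∀ t : ℕ, 1 ≤ t → t ≤ n →
      eLpNorm (fun ω => X n t ω - Xt ((t : ℝ) / (n : ℝ)) (t : ℤ) ω) (ENNReal.ofReal q) μ
        ≤ ENNReal.ofReal (CB * (n : ℝ)⁻¹))
    -- (S2) :
    (hcont : ∀ t : ℤ, ∀ᵐ ω ∂μ, ContinuousOn (fun u => Xt u t ω) (Icc (0:ℝ) 1))
    (hsupmom : ∀ t : ℤ,
      eLpNorm (fun ω => ⨆ u : Icc (0:ℝ) 1, |Xt (u : ℝ) t ω|) (ENNReal.ofReal q) μ < ⊤)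
    -- (S3) :
    (hderiv : ∀ t : ℤ, ∀ᵐ ω ∂μ,
      (∀ u ∈ Icc (0:ℝ) 1,
        HasDerivWithinAt (fun v => Xt v t ω) (DX u t ω) (Icc (0:ℝ) 1) u) ∧
      ContinuousOn (fun u => DX u t ω) (Icc (0:ℝ) 1))
    (hDmom : ∀ t : ℤ,
      eLpNorm (fun ω => ⨆ u : Icc (0:ℝ) 1, |DX (u : ℝ) t ω|) (ENNReal.ofReal q) μ < ⊤) :
    (∃ C : ℝ, 0 < C ∧ ∀ n : ℕ, 1 ≤ n → ∀ t : ℕ, r < t → t ≤ n →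
      |covar μ (X n t) (X n (t - r))
          - covar μ (Xt ((t : ℝ) / (n : ℝ)) (r : ℤ)) (Xt ((t : ℝ) / (n : ℝ)) 0)|
        ≤ C * (n : ℝ)⁻¹) ∧
    (∀ u ∈ Icc (0:ℝ) 1,
      HasDerivWithinAt (fun v => covar μ (Xt v (r : ℤ)) (Xt v 0))
        (covar μ (DX u 0) (Xt u (r : ℤ)) + covar μ (Xt u 0) (DX u (r : ℤ)))
        (Icc (0:ℝ) 1) u) ∧
    ContinuousOn (fun u => covar μ (DX u 0) (Xt u (r : ℤ))
      + covar μ (Xt u 0) (DX u (r : ℤ))) (Icc (0:ℝ) 1) :=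
  covariance_expansion_general μ X Xt DX hXmeas hXtmeas hstat r q hq CB hCB hmom hhoelder happrox
    hcont hsupmom hderiv hDmom
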